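/- arXiv:2510.11651 — 3 statements merged into one kernel-verified Lean document; each statement's English description precedes it below -/
import Mathlib

section
/- Let G be an abelian group with torsion subgroup T, let h : G → G be a group endomorphism, and let h̄ : G/T → G/T be the endomorphism induced by h on the quotient G/T. If the torsion subgroup of the cokernel coker(h) = G/h(G) is finite, then the torsion subgroup of coker(h̄) = (G/T)/h̄(G/T) is also finite and its cardinality satisfies |tors(coker(h̄))| ≤ |tors(coker(h))|. -/
/-!
The quotient map `G → G/T` induces a surjection `coker h → coker h̄` whose kernel is torsion,
because it is generated by the image of `T`. A surjection with torsion kernel maps the torsion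
subgroup onto the torsion subgroup: if `n • f x = 0` then `n • x` lies in the torsion kernel,
so `x` itself is torsion.
-/

open AddCommGroup QuotientAddGroup

namespace CommGroup

variable {G H : Type*} [CommGroup G] [CommGroup H] {f : G →* H}

@[to_additive]
lemma map_torsion_eq_of_surjective (hf : Function.Surjective f) (hker : f.ker ≤ torsion G) :
    (torsion G).map f = torsion H := by
  refine le_antisymm (map_torsion_le f) fun y hy => ?_
  obtain ⟨x, rfl⟩ := hf y
  obtain ⟨n, hn, hxn⟩ := hy.exists_pow_eq_one
  have hxn_torsion : IsOfFinOrder (x ^ n) := hker (by rwa [MonoidHom.mem_ker, map_pow])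
  exact ⟨x, hxn_torsion.of_pow hn.ne', rfl⟩

@[to_additive]
lemma finite_torsion_and_card_le_of_surjective (hf : Function.Surjective f)
    (hker : f.ker ≤ torsion G) [Finite (torsion G)] :
    Finite (torsion H) ∧ Nat.card (torsion H) ≤ Nat.card (torsion G) := by
  rw [← map_torsion_eq_of_surjective hf hker]
  have hsurj := f.subgroupMap_surjective (torsion G)
  exact ⟨.of_surjective _ hsurj, Nat.card_le_card_of_surjective _ hsurj⟩

end CommGroup

section Cokernel

variable {G G' : Type*} [AddCommGroup G] [AddCommGroup G'] {h : G →+ G} {h' : G' →+ G'}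
  {p : G →+ G'}

lemma AddMonoidHom.range_le_comap_range_of_comm (hcomm : ∀ g, h' (p g) = p (h g)) :
    h.range ≤ h'.range.comap p := by
  rintro _ ⟨a, rfl⟩
  exact ⟨p a, hcomm a⟩

lemma QuotientAddGroup.ker_map_range_le_torsion (hp : Function.Surjective p)
    (hker : p.ker ≤ torsion G) (hcomm : ∀ g, h' (p g) = p (h g)) :
    (map h.range h'.range p (AddMonoidHom.range_le_comap_range_of_comm hcomm)).ker ≤
      torsion (G ⧸ h.range) := by
  intro x hx
  obtain ⟨g, rfl⟩ := mk_surjective x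
  obtain ⟨z, hz⟩ := (eq_zero_iff _).mp hx
  obtain ⟨a, rfl⟩ := hp z
  -- modulo `h(G)`, `g` agrees with `g - h a`, which lies in `ker p`
  have hdiff : g - h a ∈ p.ker := by
    rw [AddMonoidHom.mem_ker, map_sub, ← hcomm, hz, sub_self]
  have hmk : (g : G ⧸ h.range) = ((g - h a : G) : G ⧸ h.range) :=
    eq_iff_sub_mem.mpr (by simp)
  rw [hmk]
  exact map_torsion_le (mk' h.range) ⟨_, hker hdiff, rfl⟩

end Cokernel

/-- Let `G` be an abelian group with torsion subgroup `T`, `h : G → G` an endomorphism and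
`h̄ : G/T → G/T` the induced endomorphism (characterized by commuting with the quotient map).
If the torsion subgroup of `coker h = G / h(G)` is finite, then the torsion subgroup of
`coker h̄ = (G/T) / h̄(G/T)` is finite and its cardinality is at most that of
the torsion subgroup of `coker h`. -/
theorem torsion_coker_induced_le {G : Type*} [AddCommGroup G] (h : G →+ G)
    (hbar : (G ⧸ AddCommGroup.torsion G) →+ (G ⧸ AddCommGroup.torsion G))
    (hcomm : ∀ g : G, hbar (QuotientAddGroup.mk g) = QuotientAddGroup.mk (h g))
    (hfin : Finite (AddCommGroup.torsion (G ⧸ h.range))) :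
    Finite (AddCommGroup.torsion ((G ⧸ AddCommGroup.torsion G) ⧸ hbar.range)) ∧
      Nat.card (AddCommGroup.torsion ((G ⧸ AddCommGroup.torsion G) ⧸ hbar.range)) ≤
        Nat.card (AddCommGroup.torsion (G ⧸ h.range)) := by
  have hp : Function.Surjective (mk' (torsion G)) := mk'_surjective _
  have hker : (mk' (torsion G)).ker ≤ torsion G := (ker_mk' _).le
  exact finite_torsion_and_card_le_of_surjective
    (map_surjective_of_surjective _ _ _ (mk_surjective.comp hp) _)
    (ker_map_range_le_torsion hp hker hcomm)
end

section
/- Let n ≥ 1 and let A be an n×n integer matrix with det(A) = ±1. If no complex eigenvalue of A is a root of unity, then A has a complex eigenvalue λ with |λ| > 1; equivalently, the spectral radius satisfies ρ(A) > 1. -/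
open Polynomial IntermediateField

private lemma multiset_prod_le_one_aux (s : Multiset ℝ) (h : ∀ x ∈ s, 0 ≤ x ∧ x ≤ 1) :
    s.prod ≤ 1 := by
  induction s using Multiset.induction with
  | empty => simp
  | cons a t ih =>
    have ha := h a (Multiset.mem_cons_self a t)
    have ht := ih (fun x hx => h x (Multiset.mem_cons_of_mem hx))
    have htn : (0:ℝ) ≤ t.prod := Multiset.prod_nonneg fun x hx =>
      (h x (Multiset.mem_cons_of_mem hx)).1
    simp only [Multiset.prod_cons]
    calc a * t.prod ≤ 1 * 1 := mul_le_mul ha.2 ht htn zero_le_one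
    _ = 1 := by ring

private lemma multiset_eq_one_of_prod_eq_one (s : Multiset ℝ)
    (h : ∀ x ∈ s, 0 ≤ x ∧ x ≤ 1) (hp : s.prod = 1) : ∀ x ∈ s, x = 1 := by
  intro x hx
  obtain ⟨t, rfl⟩ := Multiset.exists_cons_of_mem hx
  rw [Multiset.prod_cons] at hp
  have hx01 := h x (Multiset.mem_cons_self x t)
  have ht : t.prod ≤ 1 := multiset_prod_le_one_aux t
    (fun y hy => h y (Multiset.mem_cons_of_mem hy))
  have h1x : 1 ≤ x := by
    nlinarith [hx01.1, hx01.2]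
  linarith [hx01.2]

/-- Let `n ≥ 1` and let `A` be an `n × n` integer matrix with `det A = 1` or `det A = -1`. If no
complex eigenvalue of `A` is a root of unity, then `A` has a complex eigenvalue of modulus
strictly greater than `1`. -/
theorem exists_eigenvalue_abs_gt_one_of_no_rootOfUnity
    (n : ℕ) (hn : 1 ≤ n) (A : Matrix (Fin n) (Fin n) ℤ) (hA : A.det = 1 ∨ A.det = -1)
    (hnru : ∀ lam ∈ (A.map (fun x : ℤ => (x : ℂ))).charpoly.roots,
      ∀ m : ℕ, 0 < m → lam ^ m ≠ 1) :
    ∃ lam ∈ (A.map (fun x : ℤ => (x : ℂ))).charpoly.roots, 1 < ‖lam‖ := by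
  by_contra hcon
  push_neg at hcon
  set P := (A.map (fun x : ℤ => (x : ℂ))).charpoly with hPdef
  have hPmap : P = A.charpoly.map (Int.castRingHom ℂ) := by
    rw [hPdef, show ((fun x : ℤ => (x : ℂ))) = ⇑(Int.castRingHom ℂ) from rfl,
      Matrix.charpoly_map]
  have hmonic : P.Monic := Matrix.charpoly_monic _
  have hsplits : P.Splits := IsAlgClosed.splits P
  have hdeg : P.natDegree = n := by
    rw [hPdef, Matrix.charpoly_natDegree_eq_dim, Fintype.card_fin]
  -- product of roots equals det (up to sign), so has absolute value 1
  have hcoeff : P.coeff 0 = (-1) ^ n * P.roots.prod := by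
    rw [← hdeg]; exact hsplits.coeff_zero_eq_prod_roots_of_monic hmonic
  have hdetP : (A.map (fun x : ℤ => (x : ℂ))).det = (-1) ^ n * P.coeff 0 := by
    rw [hPdef, Matrix.det_eq_sign_charpoly_coeff, Fintype.card_fin]
  have hdetcast : (A.map (fun x : ℤ => (x : ℂ))).det = ((A.det : ℤ) : ℂ) := by
    rw [show (A.map (fun x : ℤ => (x : ℂ))) = (Int.castRingHom ℂ).mapMatrix A from rfl,
      ← RingHom.map_det]
    rfl
  have hprod : P.roots.prod = ((A.det : ℤ) : ℂ) := by
    have : ((A.det : ℤ) : ℂ) = (-1) ^ n * ((-1) ^ n * P.roots.prod) := by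
      rw [← hcoeff, ← hdetP, hdetcast]
    rw [this, ← mul_assoc, ← mul_pow]
    simp
  have habsprod : (P.roots.map (normHom : ℂ →*₀ ℝ)).prod = 1 := by
    rw [← map_multiset_prod (normHom : ℂ →*₀ ℝ), hprod]
    rcases hA with h | h <;> simp [h]
  -- every root has absolute value exactly 1
  have habs : ∀ lam ∈ P.roots, ‖lam‖ = 1 := by
    intro lam hlam
    have := multiset_eq_one_of_prod_eq_one (P.roots.map (normHom : ℂ →*₀ ℝ))
      (by
        intro x hx
        obtain ⟨z, hz, rfl⟩ := Multiset.mem_map.mp hx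
        exact ⟨norm_nonneg z, hcon z hz⟩) habsprod
    exact this (‖lam‖) (Multiset.mem_map_of_mem _ hlam)
  -- pick a root
  have hcard : Multiset.card P.roots = n := by
    rw [← hdeg, ← splits_iff_card_roots.mp hsplits]
  have hne : P.roots ≠ 0 := by
    intro h0
    rw [h0] at hcard
    simp at hcard
    omega
  obtain ⟨lam, hlam⟩ := Multiset.exists_mem_of_ne_zero hne
  -- lam is an algebraic integer
  have hint : IsIntegral ℤ lam := by
    refine ⟨A.charpoly, Matrix.charpoly_monic A, ?_⟩
    have := (mem_roots (hmonic.ne_zero)).mp hlam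
    rw [hPmap] at this
    simpa [IsRoot, eval₂_eq_eval_map] using this
  have hintQ : IsIntegral ℚ lam := hint.tower_top
  haveI : FiniteDimensional ℚ ℚ⟮lam⟯ := IntermediateField.adjoin.finiteDimensional hintQ
  haveI : NumberField ℚ⟮lam⟯ := {}
  set x : ℚ⟮lam⟯ := IntermediateField.AdjoinSimple.gen ℚ lam with hx
  have hgen : algebraMap ℚ⟮lam⟯ ℂ x = lam := IntermediateField.AdjoinSimple.algebraMap_gen ℚ lam
  have hinj : Function.Injective (algebraMap ℚ⟮lam⟯ ℂ) := (algebraMap ℚ⟮lam⟯ ℂ).injective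
  have hxi : IsIntegral ℤ x := by
    rw [← isIntegral_algebraMap_iff hinj, hgen]; exact hint
  -- every embedding sends x to a root of P, hence has norm 1
  have hnorm : ∀ φ : ℚ⟮lam⟯ →+* ℂ, ‖φ x‖ = 1 := by
    intro φ
    have hmem : φ x ∈ (minpoly ℚ x).rootSet ℂ := by
      rw [← NumberField.Embeddings.range_eval_eq_rootSet_minpoly ℚ⟮lam⟯ ℂ x]
      exact ⟨φ, rfl⟩
    have hminq : minpoly ℚ x = minpoly ℚ lam := by
      rw [← minpoly.algebraMap_eq hinj x, hgen]
    -- minpoly ℚ lam divides the rationalized charpoly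
    have hint0 : aeval lam A.charpoly = 0 := by
      have h2 := (mem_roots (hmonic.ne_zero)).mp hlam
      rw [hPmap] at h2
      rw [aeval_def, eval₂_eq_eval_map, algebraMap_int_eq]
      exact h2
    have hdvd : minpoly ℚ lam ∣ A.charpoly.map (Int.castRingHom ℚ) := by
      apply minpoly.dvd
      rw [show (Int.castRingHom ℚ) = algebraMap ℤ ℚ from (algebraMap_int_eq ℚ).symm,
        aeval_map_algebraMap]
      exact hint0
    have hroot : aeval (φ x) (minpoly ℚ lam) = 0 := by
      rw [← hminq]
      exact (mem_rootSet.mp hmem).2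
    have hrootP : φ x ∈ P.roots := by
      obtain ⟨q, hq⟩ := hdvd
      rw [mem_roots hmonic.ne_zero]
      have haux : aeval (φ x) (A.charpoly.map (Int.castRingHom ℚ)) = 0 := by
        rw [hq, map_mul, hroot, zero_mul]
      have h3 : aeval (φ x) A.charpoly = 0 := by
        rwa [show (Int.castRingHom ℚ) = algebraMap ℤ ℚ from (algebraMap_int_eq ℚ).symm,
          aeval_map_algebraMap] at haux
      rw [hPmap]
      show Polynomial.eval (φ x) (A.charpoly.map (Int.castRingHom ℂ)) = 0
      rw [← algebraMap_int_eq, ← eval₂_eq_eval_map, ← aeval_def]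
      exact h3
    exact habs _ hrootP
  obtain ⟨m, hm, hxm⟩ := NumberField.Embeddings.pow_eq_one_of_norm_eq_one ℚ⟮lam⟯ ℂ hxi hnorm
  have : lam ^ m = 1 := by
    rw [← hgen, ← map_pow, hxm, map_one]
  exact hnru lam hlam m hm this
end

section
/- Fix an integer k ≥ 1 and work in ℝ^{k+1} with standard basis vectors e_0, …, e_k. For each 0 ≤ i ≤ k−1, let σ_i ⊆ ℝ^{k+1} be the convex hull of the set {e_0, …, e_{k−i−1}} ∪ {e_j + e_k : k−i−1 ≤ j ≤ k−1}. Then the union ⋃_{i=0}^{k−1} σ_i equals the prism {x + t·e_k : x ∈ Δ^{k−1}, t ∈ [0,1]}, where Δ^{k−1} is the convex hull of e_0, …, e_{k−1}, i.e., the union of these k simplices is exactly the product of the standard (k−1)-simplex with the unit interval in the e_k-direction. -/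
set_option maxRecDepth 4000

open Finset

private lemma sum_smul_single' {k : ℕ} (c : Fin (k+1) → ℝ) :
    ∑ j, c j • (Pi.single j 1 : Fin (k+1) → ℝ) = c := by
  funext idx
  simp [Finset.sum_apply, Pi.single_apply, mul_ite]

/-- Fix `k ≥ 1` and work in `ℝ^{k+1}` with standard basis `e_0, …, e_k`. For `0 ≤ i ≤ k-1`
let `σ i` be the convex hull of `{e_0, …, e_{k-i-1}} ∪ {e_j + e_k : k-i-1 ≤ j ≤ k-1}`.
Then `⋃_{i=0}^{k-1} σ i` is exactly the prism `{x + t • e_k : x ∈ Δ^{k-1}, t ∈ [0,1]}`,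
where `Δ^{k-1}` is the convex hull of `e_0, …, e_{k-1}`. -/
theorem iUnion_prism_simplices_eq_prod_simplex_interval (k : ℕ) (hk : 1 ≤ k) :
    let e : Fin (k + 1) → (Fin (k + 1) → ℝ) := fun j => Pi.single j 1
    let ek : Fin (k + 1) → ℝ := e ⟨k, Nat.lt_succ_self k⟩
    let Δ : Set (Fin (k + 1) → ℝ) :=
      convexHull ℝ {v | ∃ j : Fin (k + 1), (j : ℕ) < k ∧ v = e j}
    let σ : ℕ → Set (Fin (k + 1) → ℝ) := fun i =>
      convexHull ℝ
        ({v | ∃ j : Fin (k + 1), (j : ℕ) ≤ k - i - 1 ∧ v = e j} ∪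
          {v | ∃ j : Fin (k + 1), k - i - 1 ≤ (j : ℕ) ∧ (j : ℕ) ≤ k - 1 ∧ v = e j + ek})
    (⋃ i ∈ Finset.range k, σ i) =
      {y | ∃ x ∈ Δ, ∃ t ∈ Set.Icc (0 : ℝ) 1, y = x + t • ek} := by
  intro e ek Δ σ
  have hsingle : ∀ c : Fin (k+1) → ℝ, ∑ j, c j • e j = c := fun c => sum_smul_single' c
  apply Set.Subset.antisymm
  · -- forward inclusion
    simp only [Set.iUnion_subset_iff]
    intro i hi
    have hik : i < k := Finset.mem_range.mp hi
    apply convexHull_min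
    · rintro v (⟨j, hj, rfl⟩ | ⟨j, hj1, hj2, rfl⟩)
      · exact ⟨e j, subset_convexHull ℝ _ ⟨j, by omega, rfl⟩, 0,
          ⟨le_refl _, zero_le_one⟩, by simp⟩
      · exact ⟨e j, subset_convexHull ℝ _ ⟨j, by omega, rfl⟩, 1,
          ⟨zero_le_one, le_refl _⟩, by simp⟩
    · rintro y1 ⟨x1, hx1, t1, ht1, rfl⟩ y2 ⟨x2, hx2, t2, ht2, rfl⟩ a b ha hb hab
      refine ⟨a • x1 + b • x2, (convex_convexHull ℝ _) hx1 hx2 ha hb hab,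
        a * t1 + b * t2, ?_, by module⟩
      have := (convex_Icc (0:ℝ) 1) ht1 ht2 ha hb hab
      simpa using this
  · -- reverse inclusion
    rintro y ⟨x, hx, t, ht, rfl⟩
    -- coordinate description of Δ
    have hD : (∀ j, 0 ≤ x j) ∧ x ⟨k, Nat.lt_succ_self k⟩ = 0 ∧ ∑ j, x j = 1 := by
      have hsub : Δ ⊆ {z : Fin (k+1) → ℝ |
          (∀ j, 0 ≤ z j) ∧ z ⟨k, Nat.lt_succ_self k⟩ = 0 ∧ ∑ j, z j = 1} := by
        apply convexHull_min
        · rintro v ⟨j, hj, rfl⟩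
          refine ⟨fun c => ?_, ?_, ?_⟩
          · simp only [e, Pi.single_apply]
            split <;> norm_num
          · simp only [e, Pi.single_apply]
            rw [if_neg]
            intro h
            have : (k : ℕ) = (j : ℕ) := congrArg Fin.val h
            omega
          · simp [e, Pi.single_apply]
        · rintro x1 ⟨h1n, h1l, h1s⟩ x2 ⟨h2n, h2l, h2s⟩ a b ha hb hab
          refine ⟨fun c => ?_, ?_, ?_⟩
          · have := add_nonneg (mul_nonneg ha (h1n c)) (mul_nonneg hb (h2n c))
            simpa using this
          · simp [h1l, h2l]
          · simp only [Pi.add_apply, Pi.smul_apply, smul_eq_mul]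
            rw [Finset.sum_add_distrib, ← Finset.mul_sum, ← Finset.mul_sum, h1s, h2s]
            simpa using hab
      exact hsub hx
    obtain ⟨hxn, hxl, hxs⟩ := hD
    have ht0 : (0:ℝ) ≤ t := ht.1
    have ht1 : t ≤ 1 := ht.2
    -- ℕ-indexed coordinates and tail sums
    set x' : ℕ → ℝ := fun n => if h : n < k+1 then x ⟨n, h⟩ else 0 with hx'def
    have hx' : ∀ j : Fin (k+1), x' (j : ℕ) = x j := by
      intro j
      simp [hx'def, j.isLt]
      intro h; exact absurd h (by omega)
    set T : ℕ → ℝ := fun n => ∑ p ∈ Finset.Ico n k, x' p with hTdef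
    have hxk : x' k = 0 := by
      simp only [hx'def, Nat.lt_succ_self, dif_pos]
      exact hxl
    have hsumall : ∑ n ∈ Finset.range (k+1), x' n = 1 := by
      rw [← Fin.sum_univ_eq_sum_range]
      rw [Finset.sum_congr rfl (fun j _ => hx' j)]
      exact hxs
    have hT0 : T 0 = 1 := by
      have : ∑ n ∈ Finset.range (k+1), x' n = (∑ n ∈ Finset.range k, x' n) + x' k :=
        Finset.sum_range_succ x' k
      simp only [hTdef]
      rw [← Finset.range_eq_Ico]
      rw [this, hxk, add_zero] at hsumall
      exact hsumall
    have hTk : T k = 0 := by simp [hTdef]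
    have hTrec : ∀ n, n < k → T n = x' n + T (n+1) := by
      intro n hn
      simp only [hTdef]
      exact Finset.sum_eq_sum_Ico_succ_bot hn x'
    -- choose the index m
    have hS : ((Finset.range k).filter (fun n => t ≤ T n)).Nonempty := by
      refine ⟨0, Finset.mem_filter.mpr ⟨Finset.mem_range.mpr hk, ?_⟩⟩
      rw [hT0]; exact ht1
    set m := ((Finset.range k).filter (fun n => t ≤ T n)).max' hS with hm
    have hmmem := Finset.max'_mem _ hS
    have hmk : m < k := Finset.mem_range.mp (Finset.mem_filter.mp hmmem).1
    have htm : t ≤ T m := (Finset.mem_filter.mp hmmem).2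
    have htm1 : T (m+1) ≤ t := by
      by_cases h : m + 1 < k
      · by_contra hlt
        push_neg at hlt
        have hmem2 : m + 1 ∈ (Finset.range k).filter (fun n => t ≤ T n) :=
          Finset.mem_filter.mpr ⟨Finset.mem_range.mpr h, le_of_lt hlt⟩
        have := Finset.le_max' _ _ hmem2
        omega
      · have hmk1 : m + 1 = k := by omega
        rw [hmk1, hTk]; exact ht0
    -- weights and points
    set lam : Fin (k+1) → ℝ := fun j =>
      if (j:ℕ) < m then x j else if (j:ℕ) = m then T m - t else 0 with hlam
    set mu : Fin (k+1) → ℝ := fun j =>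
      if (j:ℕ) = m then t - T (m+1) else if m < (j:ℕ) ∧ (j:ℕ) ≤ k-1 then x j else 0 with hmu
    set w : Fin (k+1) ⊕ Fin (k+1) → ℝ := Sum.elim lam mu with hw
    set z : Fin (k+1) ⊕ Fin (k+1) → (Fin (k+1) → ℝ) :=
      Sum.elim (fun j => if (j:ℕ) ≤ m then e j else e 0)
        (fun j => if m ≤ (j:ℕ) ∧ (j:ℕ) ≤ k-1 then e j + ek else e 0) with hz
    have hieq : k - (k - 1 - m) - 1 = m := by omega
    -- sums of lam and mu
    have hlamsum : ∑ j, lam j = (∑ n ∈ Finset.range m, x' n) + (T m - t) := by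
      have : ∀ j : Fin (k+1), lam j =
          (if (j:ℕ) < m then x' (j:ℕ) else 0) + (if (j:ℕ) = m then T m - t else 0) := by
        intro j
        simp only [hlam, hx' j]
        split_ifs with h1 h2 <;> first | omega | ring
      rw [Finset.sum_congr rfl (fun j _ => this j), Finset.sum_add_distrib]
      congr 1
      · rw [Fin.sum_univ_eq_sum_range (fun n => if n < m then x' n else 0) (k+1)]
        rw [← Finset.sum_filter]
        congr 1
        ext n
        simp only [Finset.mem_filter, Finset.mem_range]
        omega
      · rw [Fin.sum_univ_eq_sum_range (fun n => if n = m then T m - t else 0) (k+1)]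
        rw [Finset.sum_ite_eq' (Finset.range (k+1)) m (fun _ => T m - t)]
        rw [if_pos (Finset.mem_range.mpr (by omega))]
    have hmusum : ∑ j, mu j = t := by
      have : ∀ j : Fin (k+1), mu j =
          (if (j:ℕ) = m then t - T (m+1) else 0) +
          (if m < (j:ℕ) ∧ (j:ℕ) ≤ k-1 then x' (j:ℕ) else 0) := by
        intro j
        simp only [hmu, hx' j]
        split_ifs with h1 h2 <;> first | omega | ring
      rw [Finset.sum_congr rfl (fun j _ => this j), Finset.sum_add_distrib]
      have e1 : ∑ j : Fin (k+1), (if (j:ℕ) = m then t - T (m+1) else 0) = t - T (m+1) := by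
        rw [Fin.sum_univ_eq_sum_range (fun n => if n = m then t - T (m+1) else 0) (k+1)]
        rw [Finset.sum_ite_eq' (Finset.range (k+1)) m (fun _ => t - T (m+1))]
        rw [if_pos (Finset.mem_range.mpr (by omega))]
      have e2 : ∑ j : Fin (k+1), (if m < (j:ℕ) ∧ (j:ℕ) ≤ k-1 then x' (j:ℕ) else 0)
          = T (m+1) := by
        rw [Fin.sum_univ_eq_sum_range (fun n => if m < n ∧ n ≤ k-1 then x' n else 0) (k+1)]
        rw [← Finset.sum_filter]
        simp only [hTdef]
        congr 1
        ext n
        simp only [Finset.mem_filter, Finset.mem_range, Finset.mem_Ico]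
        omega
      rw [e1, e2]; ring
    have hwsum : ∑ i, w i = 1 := by
      rw [hw, Fintype.sum_sum_type]
      simp only [Sum.elim_inl, Sum.elim_inr]
      rw [hlamsum, hmusum]
      have hconsec : (∑ n ∈ Finset.Ico 0 m, x' n) + ∑ n ∈ Finset.Ico m k, x' n
          = ∑ n ∈ Finset.Ico 0 k, x' n :=
        Finset.sum_Ico_consecutive x' (Nat.zero_le m) (le_of_lt hmk)
      have hr : ∑ n ∈ Finset.range m, x' n + T m = 1 := by
        have h1 : T m = ∑ n ∈ Finset.Ico m k, x' n := rfl
        have h2 : T 0 = ∑ n ∈ Finset.Ico 0 k, x' n := rfl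
        rw [h1, Finset.range_eq_Ico, hconsec, ← h2, hT0]
      linarith
    -- the convex combination equals y
    have hkey : ∑ i, w i • z i = x + t • ek := by
      rw [Fintype.sum_sum_type]
      simp only [hw, Sum.elim_inl, Sum.elim_inr]
      have hL : ∑ j, lam j • z (Sum.inl j) = ∑ j, lam j • e j := by
        apply Finset.sum_congr rfl
        intro j _
        by_cases h : (j:ℕ) ≤ m
        · simp [hz, h]
        · have : lam j = 0 := by simp only [hlam]; rw [if_neg (by omega), if_neg (by omega)]
          simp [this]
      have hR : ∑ j, mu j • z (Sum.inr j) = ∑ j, mu j • (e j + ek) := by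
        apply Finset.sum_congr rfl
        intro j _
        by_cases h : m ≤ (j:ℕ) ∧ (j:ℕ) ≤ k-1
        · simp [hz, h]
        · have : mu j = 0 := by simp only [hmu]; rw [if_neg (by omega), if_neg (by omega)]
          simp [this]
      simp only [hz, Sum.elim_inl, Sum.elim_inr] at hL hR ⊢
      rw [hL, hR]
      have expand : ∑ j, mu j • (e j + ek) = (∑ j, mu j • e j) + (∑ j, mu j) • ek := by
        rw [Finset.sum_smul]
        rw [← Finset.sum_add_distrib]
        apply Finset.sum_congr rfl
        intro j _
        rw [smul_add]
      rw [expand, hmusum, ← add_assoc, ← Finset.sum_add_distrib]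
      have combine : ∑ j, (lam j • e j + mu j • e j) = ∑ j, (lam j + mu j) • e j := by
        apply Finset.sum_congr rfl
        intro j _
        rw [add_smul]
      rw [combine]
      congr 1
      have : (fun j => lam j + mu j) = x := by
        funext j
        have hjk : (j:ℕ) ≤ k := by omega
        simp only [hlam, hmu]
        rcases lt_trichotomy ((j:ℕ)) m with h | h | h
        · rw [if_pos h, if_neg (by omega), if_neg (by omega)]; ring
        · rw [if_neg (by omega), if_pos h, if_pos h]
          have := hTrec m hmk
          have hxm : x' m = x j := by rw [← h]; exact hx' j
          rw [← hxm]; linarith [hTrec m hmk]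
        · rw [if_neg (by omega), if_neg (by omega), if_neg (by omega)]
          by_cases hj2 : (j:ℕ) ≤ k - 1
          · rw [if_pos ⟨h, hj2⟩]; ring
          · rw [if_neg (by omega)]
            have hjeq : j = ⟨k, Nat.lt_succ_self k⟩ := by
              apply Fin.ext; simp; omega
            rw [hjeq, hxl]; ring
      rw [← this]
      exact hsingle _
    -- membership in σ (k-1-m)
    have hmemσ : x + t • ek ∈ σ (k - 1 - m) := by
      rw [← hkey]
      apply Convex.sum_mem (convex_convexHull ℝ _)
      · rintro (j | j) _
        · simp only [hw, Sum.elim_inl, hlam]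
          split_ifs
          · exact hxn j
          · linarith
          · exact le_rfl
        · simp only [hw, Sum.elim_inr, hmu]
          split_ifs
          · linarith
          · exact hxn j
          · exact le_rfl
      · exact hwsum
      · rintro (j | j) _
        · simp only [hz, Sum.elim_inl]
          by_cases h : (j:ℕ) ≤ m
          · rw [if_pos h]
            exact subset_convexHull ℝ _ (Or.inl ⟨j, by omega, rfl⟩)
          · rw [if_neg h]
            exact subset_convexHull ℝ _ (Or.inl ⟨0, by simp [hieq], rfl⟩)
        · simp only [hz, Sum.elim_inr]
          by_cases h : m ≤ (j:ℕ) ∧ (j:ℕ) ≤ k-1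
          · rw [if_pos h]
            exact subset_convexHull ℝ _ (Or.inr ⟨j, by omega, by omega, rfl⟩)
          · rw [if_neg h]
            exact subset_convexHull ℝ _ (Or.inl ⟨0, by simp [hieq], rfl⟩)
    exact Set.mem_biUnion (Finset.mem_range.mpr (by omega)) hmemσ
end
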